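/- arXiv:2301.11817 — 3 statements merged into one kernel-verified Lean document; each statement's English description precedes it below -/
import Mathlib

section
/- The accelerated gossip iterates contract towards consensus: for every T ≥ 0 it holds that ‖y^T − x̄‖₂² ≤ 2χ·(1 − 1/√χ)^T·‖x⁰ − x̄‖₂². -/
/-!
Pass to the errors `x_k - x̄`, `y_k - x̄`: they follow the same iteration (the Laplacians kill
constants) and stay in the sum-zero subspace (the Laplacians have zero column sums), where
`λmin ≤ Ŵ^k ≤ λmax`. With `τ = 1/√χ`, the Nesterov potential
`Φ_k = ⟨y_k, Ŵ^k y_k⟩ + λmax ‖(1 + τ) x_k - y_k‖²` contracts by the factor `1 - τ` at every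
step, as in the analysis of accelerated gradient descent on a fixed quadratic; the time
dependence is harmless because `Ĝ_{k+1} ≤ Ĝ_k` gives `Ŵ^{k+1} ≤ Ŵ^k`. Finally
`λmin ‖y_T‖² ≤ Φ_T` and `Φ_0 ≤ (λmax + λmin) ‖x_0‖² ≤ 2 χ λmin ‖x_0‖²`.
-/

open Matrix Finset
open scoped BigOperators

section NesterovPotential

variable {ι : Type*} [Fintype ι]

theorem Matrix.IsSymm.dotProduct_mulVec_comm {B : Matrix ι ι ℝ} (hB : B.IsSymm) (u v : ι → ℝ) :
    u ⬝ᵥ (B *ᵥ v) = v ⬝ᵥ (B *ᵥ u) := by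
  rw [dotProduct_mulVec, ← mulVec_transpose, hB.eq, dotProduct_comm]

def nesterovPotential (B : Matrix ι ι ℝ) (L τ : ℝ) (x y : ι → ℝ) : ℝ :=
  y ⬝ᵥ (B *ᵥ y) + L * (((1 + τ) • x - y) ⬝ᵥ ((1 + τ) • x - y))

variable {B : Matrix ι ι ℝ} {L τ : ℝ}

theorem le_nesterovPotential (hL : 0 ≤ L) (x y : ι → ℝ) :
    y ⬝ᵥ (B *ᵥ y) ≤ nesterovPotential B L τ x y :=
  le_add_of_nonneg_right (mul_nonneg hL (sum_nonneg fun _ _ => mul_self_nonneg _))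

theorem nesterovPotential_self_le {v : ι → ℝ} (hub : v ⬝ᵥ (B *ᵥ v) ≤ L * (v ⬝ᵥ v)) :
    nesterovPotential B L τ v v ≤ (1 + τ ^ 2) * L * (v ⬝ᵥ v) := by
  have hv : (1 + τ) • v - v = τ • v := by module
  rw [nesterovPotential, hv, dotProduct_smul, smul_dotProduct, smul_eq_mul, smul_eq_mul]
  linarith

theorem nesterovPotential_step (hB : B.IsSymm) (hpsd : ∀ v, 0 ≤ v ⬝ᵥ (B *ᵥ v))
    (hub : ∀ v, v ⬝ᵥ (B *ᵥ v) ≤ L * (v ⬝ᵥ v)) {η : ℝ} (hL : 0 ≤ L) (hη : η * L = 1)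
    (hτ0 : 0 ≤ τ) (hτ1 : τ ≤ 1) {x y x' y' : ι → ℝ}
    (hlb : τ ^ 2 * L * (x ⬝ᵥ x) ≤ x ⬝ᵥ (B *ᵥ x)) (hy' : y' = x - η • (B *ᵥ x))
    (hx' : (1 + τ) • x' - y' = y' - (1 - τ) • y) :
    nesterovPotential B L τ x' y' ≤ (1 - τ) * nesterovPotential B L τ x y := by
  have hdiff_psd := hpsd (x - y)
  have hdiff_sq : 0 ≤ (x - y) ⬝ᵥ (x - y) := sum_nonneg fun _ _ => mul_self_nonneg _
  have hgrad := hub (B *ᵥ x)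
  rw [nesterovPotential, nesterovPotential, hx', hy']
  simp only [dotProduct_sub, sub_dotProduct, dotProduct_smul, smul_dotProduct, smul_eq_mul,
    mulVec_sub, mulVec_smul, hB.dotProduct_mulVec_comm x y, hB.dotProduct_mulVec_comm x (B *ᵥ x),
    dotProduct_comm (B *ᵥ x) y, dotProduct_comm (B *ᵥ x) x, dotProduct_comm y x]
    at hdiff_psd hdiff_sq hgrad ⊢
  -- once `η L = 1`, the gap between the two sides is this sum of four nonnegative terms
  linear_combination (1 - τ) * hdiff_psd + (1 - τ) * τ * L * hdiff_sq + η ^ 2 * hgrad + τ * hlb +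
    (2 * η * ((B *ᵥ x) ⬝ᵥ (B *ᵥ x)) - 2 * (x ⬝ᵥ B *ᵥ x) + 2 * (1 - τ) * (y ⬝ᵥ B *ᵥ x)) * hη

end NesterovPotential

def IsAcceleratedIteration {ι : Type*} [Fintype ι] (W : ℕ → Matrix ι ι ℝ) (η β : ℝ)
    (x y : ℕ → ι → ℝ) : Prop :=
  (∀ k, y (k + 1) = x k - η • (W k *ᵥ x k)) ∧ ∀ k, x (k + 1) = (1 + β) • y (k + 1) - β • y k

namespace IsAcceleratedIteration

variable {ι : Type*} [Fintype ι] {W : ℕ → Matrix ι ι ℝ} {η β : ℝ} {x y : ℕ → ι → ℝ}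

theorem sub_const (h : IsAcceleratedIteration W η β x y) {c : ι → ℝ} (hc : ∀ k, W k *ᵥ c = 0) :
    IsAcceleratedIteration W η β (fun k => x k - c) (fun k => y k - c) := by
  refine ⟨fun k => ?_, fun k => ?_⟩ <;> dsimp only
  · rw [h.1 k, mulVec_sub, hc, sub_zero, sub_right_comm]
  · rw [h.2 k]
    module

theorem sum_eq_zero (h : IsAcceleratedIteration W η β x y)
    (hW : ∀ k v, ∑ i, (W k *ᵥ v) i = 0) (hx : ∑ i, x 0 i = 0) (hy : ∑ i, y 0 i = 0) (k : ℕ) :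
    ∑ i, x k i = 0 ∧ ∑ i, y k i = 0 := by
  induction k with
  | zero => exact ⟨hx, hy⟩
  | succ k ih =>
    have hy' : ∑ i, y (k + 1) i = 0 := by
      simp [h.1 k, sum_sub_distrib, ← mul_sum, hW, ih.1]
    refine ⟨?_, hy'⟩
    simp [h.2 k, sum_sub_distrib, ← mul_sum, hy', ih.2]

variable {L τ : ℝ}

theorem nesterovPotential_le_pow (h : IsAcceleratedIteration W η β x y)
    (hsymm : ∀ k, (W k).IsSymm) (hpsd : ∀ k v, 0 ≤ v ⬝ᵥ (W k *ᵥ v))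
    (hub : ∀ k v, v ⬝ᵥ (W k *ᵥ v) ≤ L * (v ⬝ᵥ v))
    (hanti : ∀ k v, v ⬝ᵥ (W (k + 1) *ᵥ v) ≤ v ⬝ᵥ (W k *ᵥ v))
    (hL : 0 ≤ L) (hη : η * L = 1) (hτ0 : 0 ≤ τ) (hτ1 : τ ≤ 1) (hβ : (1 + τ) * β = 1 - τ)
    (hlb : ∀ k, τ ^ 2 * L * (x k ⬝ᵥ x k) ≤ x k ⬝ᵥ (W k *ᵥ x k)) (T : ℕ) :
    nesterovPotential (W T) L τ (x T) (y T) ≤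
      (1 - τ) ^ T * nesterovPotential (W 0) L τ (x 0) (y 0) := by
  induction T with
  | zero => simp
  | succ k ih =>
    have hx' : (1 + τ) • x (k + 1) - y (k + 1) = y (k + 1) - (1 - τ) • y k := by
      rw [h.2 k]
      linear_combination (norm := module) hβ • (y (k + 1) - y k)
    calc nesterovPotential (W (k + 1)) L τ (x (k + 1)) (y (k + 1))
        ≤ nesterovPotential (W k) L τ (x (k + 1)) (y (k + 1)) :=
          add_le_add_left (hanti k _) _
      _ ≤ (1 - τ) * nesterovPotential (W k) L τ (x k) (y k) :=
          nesterovPotential_step (hsymm k) (hpsd k) (hub k) hL hη hτ0 hτ1 (hlb k) (h.1 k) hx'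
      _ ≤ (1 - τ) ^ (k + 1) * nesterovPotential (W 0) L τ (x 0) (y 0) := by
          rw [pow_succ', mul_assoc]
          exact mul_le_mul_of_nonneg_left ih (sub_nonneg.2 hτ1)

theorem dotProduct_self_le (h : IsAcceleratedIteration W η β x y)
    (hsymm : ∀ k, (W k).IsSymm) (hpsd : ∀ k v, 0 ≤ v ⬝ᵥ (W k *ᵥ v))
    (hub : ∀ k v, v ⬝ᵥ (W k *ᵥ v) ≤ L * (v ⬝ᵥ v))
    (hanti : ∀ k v, v ⬝ᵥ (W (k + 1) *ᵥ v) ≤ v ⬝ᵥ (W k *ᵥ v)) {μ κ : ℝ} (hμ : 0 < μ)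
    (hκ : κ = L / μ) (hκ1 : 1 < κ) (hη : η = 1 / L) (hβ : β = (√κ - 1) / (√κ + 1))
    (hlb : ∀ k, μ * (x k ⬝ᵥ x k) ≤ x k ⬝ᵥ (W k *ᵥ x k)) {T : ℕ}
    (hlbT : μ * (y T ⬝ᵥ y T) ≤ y T ⬝ᵥ (W T *ᵥ y T)) (h0 : x 0 = y 0) :
    y T ⬝ᵥ y T ≤ 2 * κ * (1 - 1 / √κ) ^ T * (y 0 ⬝ᵥ y 0) := by
  have hs : 1 < √κ := by rwa [Real.lt_sqrt zero_le_one, one_pow]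
  have hL : L = κ * μ := by rw [hκ, div_mul_cancel₀ _ hμ.ne']
  have hL0 : 0 < L := by rw [hL]; positivity
  have hμτ : (1 / √κ) ^ 2 * L = μ := by
    rw [div_pow, Real.sq_sqrt (by linarith), hL]
    field_simp
  have hτ1 : 1 / √κ ≤ 1 := (div_le_one (by positivity)).2 hs.le
  have hpow : 0 ≤ (1 - 1 / √κ) ^ T := pow_nonneg (sub_nonneg.2 hτ1) T
  have hy0 : 0 ≤ y 0 ⬝ᵥ y 0 := sum_nonneg fun _ _ => mul_self_nonneg _
  rw [← hμτ] at hlb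
  have hdecay := h.nesterovPotential_le_pow hsymm hpsd hub hanti hL0.le
    (by rw [hη, one_div_mul_cancel hL0.ne']) (by positivity) hτ1
    (by rw [hβ]; field_simp) hlb T
  have hinit : nesterovPotential (W 0) L (1 / √κ) (x 0) (y 0) ≤ 2 * κ * μ * (y 0 ⬝ᵥ y 0) := by
    rw [h0]
    refine (nesterovPotential_self_le (hub 0 (y 0))).trans ?_
    rw [add_mul, one_mul, hμτ, hL]
    exact mul_le_mul_of_nonneg_right (by nlinarith) hy0
  refine le_of_mul_le_mul_left ?_ hμ
  calc μ * (y T ⬝ᵥ y T) ≤ nesterovPotential (W T) L (1 / √κ) (x T) (y T) :=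
        hlbT.trans (le_nesterovPotential hL0.le _ _)
    _ ≤ (1 - 1 / √κ) ^ T * (2 * κ * μ * (y 0 ⬝ᵥ y 0)) :=
        hdecay.trans (mul_le_mul_of_nonneg_left hinit hpow)
    _ = μ * (2 * κ * (1 - 1 / √κ) ^ T * (y 0 ⬝ᵥ y 0)) := by ring

end IsAcceleratedIteration

namespace SimpleGraph

variable {V : Type*} [Fintype V] [DecidableEq V]

theorem dotProduct_mulVec_lapMatrix_mono {H K : SimpleGraph V} [DecidableRel H.Adj]
    [DecidableRel K.Adj] (h : H ≤ K) (v : V → ℝ) :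
    v ⬝ᵥ (H.lapMatrix ℝ *ᵥ v) ≤ v ⬝ᵥ (K.lapMatrix ℝ *ᵥ v) := by
  rw [← toLinearMap₂'_apply', ← toLinearMap₂'_apply', lapMatrix_toLinearMap₂',
    lapMatrix_toLinearMap₂']
  gcongr with i _ j _
  split_ifs with hH hK hK
  exacts [le_rfl, absurd (h hH) hK, sq_nonneg _, le_rfl]

theorem dotProduct_mulVec_lapMatrix_nonneg (H : SimpleGraph V) [DecidableRel H.Adj]
    (v : V → ℝ) : 0 ≤ v ⬝ᵥ (H.lapMatrix ℝ *ᵥ v) :=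
  (H.posSemidef_lapMatrix ℝ).dotProduct_mulVec_nonneg v

theorem lapMatrix_mulVec_const {R : Type*} [CommRing R] (H : SimpleGraph V) [DecidableRel H.Adj]
    (c : R) : H.lapMatrix R *ᵥ (fun _ => c) = 0 := by
  rw [show (fun _ => c : V → R) = c • fun _ => 1 by ext; simp, mulVec_smul,
    lapMatrix_mulVec_const_eq_zero, smul_zero]

theorem sum_lapMatrix_mulVec (H : SimpleGraph V) [DecidableRel H.Adj] (v : V → ℝ) :
    ∑ i, (H.lapMatrix ℝ *ᵥ v) i = 0 := by
  rw [← one_dotProduct, (H.isSymm_lapMatrix ℝ).dotProduct_mulVec_comm, Pi.one_def,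
    lapMatrix_mulVec_const_eq_zero, dotProduct_zero]

end SimpleGraph

def IsRunningIntersection {V : Type*} (G H : ℕ → SimpleGraph V) : Prop :=
  ∀ k u v, (H k).Adj u v ↔ ∀ j ≤ k, (G j).Adj u v

namespace IsRunningIntersection

variable {V : Type*} {G H : ℕ → SimpleGraph V}

theorem le (h : IsRunningIntersection G H) (k : ℕ) : H k ≤ G k :=
  fun _ _ hH => (h k _ _).1 hH k le_rfl

theorem le_succ (h : IsRunningIntersection G H) (k : ℕ) : H (k + 1) ≤ H k := fun _ _ hH =>
  (h k _ _).2 fun j hj => (h (k + 1) _ _).1 hH j (hj.trans k.le_succ)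

theorem le_of_forall_le (h : IsRunningIntersection G H) {S : SimpleGraph V} (hS : ∀ k, S ≤ G k)
    (k : ℕ) : S ≤ H k :=
  fun _ _ hadj => (h k _ _).2 fun j _ => hS j hadj

end IsRunningIntersection

theorem accelerated_gossip_contraction_general
    (n : ℕ)
    (G : ℕ → SimpleGraph (Fin n)) [instG : ∀ k, DecidableRel (G k).Adj]
    (skel : SimpleGraph (Fin n)) [instS : DecidableRel skel.Adj]
    (hskel : ∀ k, skel ≤ G k)
    (lammax lammin : ℝ) (hlammin : 0 < lammin)
    (hmax : ∀ k (v : Fin n → ℝ), v ⬝ᵥ ((G k).lapMatrix ℝ *ᵥ v) ≤ lammax * (v ⬝ᵥ v))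
    (hmin : ∀ v : Fin n → ℝ, (∑ i, v i) = 0 →
      lammin * (v ⬝ᵥ v) ≤ v ⬝ᵥ (skel.lapMatrix ℝ *ᵥ v))
    (χ : ℝ) (hχdef : χ = lammax / lammin) (hχ : 1 < χ)
    (hatG : ℕ → SimpleGraph (Fin n)) [instH : ∀ k, DecidableRel (hatG k).Adj]
    (hhatG : ∀ k u v, (hatG k).Adj u v ↔ ∀ j ≤ k, (G j).Adj u v)
    (W : ℕ → Matrix (Fin n) (Fin n) ℝ) (hW : ∀ k, W k = (hatG k).lapMatrix ℝ)
    (η β : ℝ)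
    (hη : η = 1 / lammax) (hβ : β = (Real.sqrt χ - 1) / (Real.sqrt χ + 1))
    (x0 : Fin n → ℝ) (x y : ℕ → Fin n → ℝ)
    (hx0 : x 0 = x0) (hy0 : y 0 = x0)
    (hyup : ∀ k, y (k + 1) = x k - η • (W k *ᵥ x k))
    (hxup : ∀ k, x (k + 1) = (1 + β) • y (k + 1) - β • y k)
    (xbar : Fin n → ℝ) (hxbar : ∀ i, xbar i = (∑ j, x0 j) / n) :
    ∀ T : ℕ,
      ∑ i, (y T i - xbar i) ^ 2 ≤
        2 * χ * (1 - 1 / Real.sqrt χ) ^ T * ∑ i, (x0 i - xbar i) ^ 2 := by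
  intro T
  have hH : IsRunningIntersection G hatG := hhatG
  have hmean : xbar = fun _ => 𝔼 j, x0 j := funext fun i => by
    rw [hxbar, Fintype.expect_eq_sum_div_card, Fintype.card_fin]
  have hit : IsAcceleratedIteration W η β (fun k => x k - xbar) (fun k => y k - xbar) :=
    IsAcceleratedIteration.sub_const ⟨hyup, hxup⟩ fun k => by
      rw [hW, hmean]; exact (hatG k).lapMatrix_mulVec_const _
  have hdev : ∑ i, (x0 - xbar) i = 0 := by rw [hmean]; exact Fintype.sum_balance x0
  have hsum := hit.sum_eq_zero (fun k v => hW k ▸ (hatG k).sum_lapMatrix_mulVec v)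
    (by rwa [hx0]) (by rwa [hy0])
  have hlow : ∀ k v, ∑ i, v i = 0 → lammin * (v ⬝ᵥ v) ≤ v ⬝ᵥ (W k *ᵥ v) := fun k v hv =>
    hW k ▸ (hmin v hv).trans
      (SimpleGraph.dotProduct_mulVec_lapMatrix_mono (hH.le_of_forall_le hskel k) v)
  have key := hit.dotProduct_self_le (fun k => hW k ▸ (hatG k).isSymm_lapMatrix ℝ)
    (fun k => hW k ▸ (hatG k).dotProduct_mulVec_lapMatrix_nonneg)
    (fun k v => hW k ▸ (SimpleGraph.dotProduct_mulVec_lapMatrix_mono (hH.le k) v).trans (hmax k v))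
    (fun k v => by
      rw [hW, hW]; exact SimpleGraph.dotProduct_mulVec_lapMatrix_mono (hH.le_succ k) v)
    hlammin hχdef hχ hη hβ (fun k => hlow k _ (hsum k).1) (hlow T _ (hsum T).2)
    (by simp only [hx0, hy0])
  simpa only [dotProduct, Pi.sub_apply, sq, hy0] using key

/-- The accelerated gossip iterates over a time-varying graph sequence
with a connected skeleton contract towards consensus: for every `T ≥ 0`,
`‖y^T − x̄‖₂² ≤ 2χ·(1 − 1/√χ)^T·‖x⁰ − x̄‖₂²`, where `x̄` is the vector of averages and
`χ = λmax/λmin` (the spectral bounds `λ_max(L(G_k)) ≤ λmax`, `λmin ≤ λ_min⁺(L(Ĝ))` being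
encoded by the corresponding quadratic-form inequalities). -/
theorem accelerated_gossip_contraction
    (n : ℕ) (hn : 0 < n)
    (G : ℕ → SimpleGraph (Fin n)) [instG : ∀ k, DecidableRel (G k).Adj]
    (skel : SimpleGraph (Fin n)) [instS : DecidableRel skel.Adj]
    (hconn : skel.Connected) (hskel : ∀ k, skel ≤ G k)
    (lammax lammin : ℝ) (hlammin : 0 < lammin)
    (hmax : ∀ k (v : Fin n → ℝ), v ⬝ᵥ ((G k).lapMatrix ℝ *ᵥ v) ≤ lammax * (v ⬝ᵥ v))
    (hmin : ∀ v : Fin n → ℝ, (∑ i, v i) = 0 →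
      lammin * (v ⬝ᵥ v) ≤ v ⬝ᵥ (skel.lapMatrix ℝ *ᵥ v))
    (χ : ℝ) (hχdef : χ = lammax / lammin) (hχ : 1 < χ)
    (hatG : ℕ → SimpleGraph (Fin n)) [instH : ∀ k, DecidableRel (hatG k).Adj]
    (hhatG : ∀ k u v, (hatG k).Adj u v ↔ ∀ j ≤ k, (G j).Adj u v)
    (W : ℕ → Matrix (Fin n) (Fin n) ℝ) (hW : ∀ k, W k = (hatG k).lapMatrix ℝ)
    (η β : ℝ)
    (hη : η = 1 / lammax) (hβ : β = (Real.sqrt χ - 1) / (Real.sqrt χ + 1))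
    (x0 : Fin n → ℝ) (x y : ℕ → Fin n → ℝ)
    (hx0 : x 0 = x0) (hy0 : y 0 = x0)
    (hyup : ∀ k, y (k + 1) = x k - η • (W k *ᵥ x k))
    (hxup : ∀ k, x (k + 1) = (1 + β) • y (k + 1) - β • y k)
    (xbar : Fin n → ℝ) (hxbar : ∀ i, xbar i = (∑ j, x0 j) / n) :
    ∀ T : ℕ,
      ∑ i, (y T i - xbar i) ^ 2 ≤
        2 * χ * (1 - 1 / Real.sqrt χ) ^ T * ∑ i, (x0 i - xbar i) ^ 2 :=
  accelerated_gossip_contraction_general n G (instG := instG) skel (instS := instS) hskel lammax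
    lammin hlammin hmax hmin χ hχdef hχ hatG (instH := instH) hhatG W hW η β hη hβ x0 x y hx0 hy0
    hyup hxup xbar hxbar
end

section
/- For all integers d ≥ 1 and k ≥ 2, the diameter of the graph H_{d,k} is at most (2d − 1)·k. -/
open Matrix

attribute [local instance] Classical.propDecidable

/-- Vertex type of the graph `H_{d+1,k}` of the paper (the index is shifted by one:
`HVertex 0 k` is the vertex set of `H_{1,k}`, a path on `k` vertices). -/
def HVertex : ℕ → ℕ → Type
  | 0, k => Fin k
  | d + 1, k => Fin k ⊕ (Fin k × HVertex d k)

instance HVertex.fintype : (d k : ℕ) → Fintype (HVertex d k)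
  | 0, k => inferInstanceAs (Fintype (Fin k))
  | d + 1, k =>
    letI := HVertex.fintype d k
    inferInstanceAs (Fintype (Fin k ⊕ (Fin k × HVertex d k)))

/-- The designated root of `H_{d+1,k}`: an endpoint of the topmost path. -/
def HRoot (d k : ℕ) [NeZero k] : HVertex d k :=
  match d with
  | 0 => (0 : Fin k)
  | _ + 1 => Sum.inl (0 : Fin k)

/-- Adjacency of `H_{d+1,k}`: `HVertex 0 k` carries the path graph on `k` vertices;
`H_{d+2,k}` is a path on `k` vertices together with, for each path vertex `i`, an edge
from `i` to the root of the `i`-th fresh copy of `H_{d+1,k}`. -/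
def HAdj (k : ℕ) [NeZero k] : (d : ℕ) → HVertex d k → HVertex d k → Prop
  | 0 => fun u v => (SimpleGraph.pathGraph k).Adj u v
  | d + 1 => fun u v =>
      match u, v with
      | Sum.inl i, Sum.inl j => (SimpleGraph.pathGraph k).Adj i j
      | Sum.inl i, Sum.inr p => i = p.1 ∧ p.2 = HRoot d k
      | Sum.inr p, Sum.inl i => p.1 = i ∧ p.2 = HRoot d k
      | Sum.inr p, Sum.inr q => p.1 = q.1 ∧ HAdj k d p.2 q.2

theorem HAdj.symm' (k : ℕ) [NeZero k] :
    ∀ (d : ℕ) (u v : HVertex d k), HAdj k d u v → HAdj k d v u := by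
  intro d
  induction d with
  | zero => exact fun u v h => (SimpleGraph.pathGraph k).adj_symm h
  | succ d ih =>
    intro u v h
    match u, v with
    | Sum.inl i, Sum.inl j => exact (SimpleGraph.pathGraph k).adj_symm h
    | Sum.inl i, Sum.inr p => exact ⟨h.1.symm, h.2⟩
    | Sum.inr p, Sum.inl i => exact ⟨h.1.symm, h.2⟩
    | Sum.inr p, Sum.inr q => exact ⟨h.1.symm, ih p.2 q.2 h.2⟩

theorem HAdj.irrefl' (k : ℕ) [NeZero k] :
    ∀ (d : ℕ) (u : HVertex d k), ¬HAdj k d u u := by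
  intro d
  induction d with
  | zero => exact fun u h => (SimpleGraph.pathGraph k).irrefl h
  | succ d ih =>
    intro u h
    match u with
    | Sum.inl i => exact (SimpleGraph.pathGraph k).irrefl h
    | Sum.inr p => exact ih p.2 h.2

/-- The graph `H_{d+1,k}` of the paper (index shifted by one: `HGraph k 0 = H_{1,k}`). -/
def HGraph (k : ℕ) [NeZero k] (d : ℕ) : SimpleGraph (HVertex d k) where
  Adj := HAdj k d
  symm := ⟨fun u v h => HAdj.symm' k d u v h⟩
  loopless := ⟨fun u h => HAdj.irrefl' k d u h⟩

/-! Every vertex of `H_{d,k}` reaches the topmost path within `(d - 1)·k` steps: inside its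
subtree it climbs to that subtree's top path, walks along it (at most `k - 1` steps) to the
subtree's root, and takes one more edge up. Two vertices are therefore joined through their
projections on the top path, which are at distance at most `k - 1`. -/

namespace SimpleGraph

variable {V W : Type*} {G : SimpleGraph V}

lemma Hom.edist_le {G' : SimpleGraph W} (f : G →g G') (u v : V) :
    G'.edist (f u) (f v) ≤ G.edist u v :=
  le_iInf fun p => (SimpleGraph.edist_le (p.map f)).trans_eq (by rw [Walk.length_map])

lemma Connected.edist_le_card_sub_one [Fintype V] (hG : G.Connected) (u v : V) :
    G.edist u v ≤ (Fintype.card V - 1 : ℕ) := by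
  obtain ⟨p⟩ := hG.preconnected u v
  have := p.toPath.2.length_lt
  exact (edist_le p.toPath.1).trans (by exact_mod_cast (by omega))

lemma pathGraph_edist_le {k : ℕ} (i j : Fin k) : (pathGraph k).edist i j ≤ (k - 1 : ℕ) := by
  cases k with
  | zero => exact i.elim0
  | succ m => simpa using (pathGraph_connected m).edist_le_card_sub_one i j

lemma diam_le_of_edist_le {n : ℕ} (h : ∀ u v, G.edist u v ≤ n) : G.diam ≤ n :=
  ENat.toNat_le_of_le_natCast (ediam_le_of_edist_le h)

end SimpleGraph

open SimpleGraph

variable {k : ℕ} [NeZero k]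

def HVertex.top : (d : ℕ) → HVertex d k → Fin k
  | 0, u => u
  | _ + 1, Sum.inl i => i
  | _ + 1, Sum.inr p => p.1

def HVertex.ofTop : (d : ℕ) → Fin k → HVertex d k
  | 0, i => i
  | _ + 1, i => Sum.inl i

def HVertex.projTop (d : ℕ) (u : HVertex d k) : HVertex d k :=
  HVertex.ofTop d (HVertex.top d u)

namespace HGraph

def topPathHom (d : ℕ) : pathGraph k →g HGraph k d where
  toFun := HVertex.ofTop d
  map_rel' h := by cases d <;> exact h

def subtreeHom (d : ℕ) (i : Fin k) : HGraph k d →g HGraph k (d + 1) where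
  toFun v := Sum.inr (i, v)
  map_rel' h := ⟨rfl, h⟩

lemma ofTop_zero (d : ℕ) : HVertex.ofTop d (0 : Fin k) = HRoot d k := by
  cases d <;> rfl

lemma edist_ofTop_le (d : ℕ) (i j : Fin k) :
    (HGraph k d).edist (HVertex.ofTop d i) (HVertex.ofTop d j) ≤ (k - 1 : ℕ) :=
  ((topPathHom d).edist_le i j).trans (pathGraph_edist_le i j)

lemma edist_projTop_le : ∀ (d : ℕ) (u : HVertex d k),
    (HGraph k d).edist u (HVertex.projTop d u) ≤ (d * k : ℕ)
  | 0, _ | _ + 1, Sum.inl _ => (SimpleGraph.edist_le .nil).trans (Nat.cast_le.2 (Nat.zero_le _))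
  | d + 1, Sum.inr (i, w) => by
    have hroot : (HGraph k d).edist w (HRoot d k) ≤ (d * k + (k - 1) : ℕ) :=
      calc (HGraph k d).edist w (HRoot d k)
          ≤ (HGraph k d).edist w (HVertex.projTop d w)
            + (HGraph k d).edist (HVertex.projTop d w) (HVertex.ofTop d 0) := by
            rw [ofTop_zero]; exact SimpleGraph.edist_triangle
        _ ≤ (d * k : ℕ) + (k - 1 : ℕ) :=
            add_le_add (edist_projTop_le d w) (edist_ofTop_le d _ _)
        _ = (d * k + (k - 1) : ℕ) := (Nat.cast_add _ _).symm
    have hup : (HGraph k (d + 1)).Adj (Sum.inr (i, HRoot d k)) (Sum.inl i) := ⟨rfl, rfl⟩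
    have hk : 1 ≤ k := NeZero.one_le
    calc (HGraph k (d + 1)).edist (Sum.inr (i, w)) (Sum.inl i)
        ≤ (HGraph k (d + 1)).edist (subtreeHom d i w) (subtreeHom d i (HRoot d k))
          + (HGraph k (d + 1)).edist (Sum.inr (i, HRoot d k)) (Sum.inl i) :=
          SimpleGraph.edist_triangle
      _ ≤ (d * k + (k - 1) : ℕ) + 1 :=
          add_le_add (((subtreeHom d i).edist_le _ _).trans hroot)
            (edist_le_one_iff_adj_or_eq.2 (.inl hup))
      _ = ((d + 1) * k : ℕ) := by
          norm_cast
          rw [add_assoc, Nat.sub_add_cancel hk, add_one_mul]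

end HGraph

theorem hgraph_diameter_bound_general (d k : ℕ) (hd : 1 ≤ d) [NeZero k] :
    (HGraph k (d - 1)).diam ≤ (2 * d - 1) * k := by
  obtain ⟨e, rfl⟩ : ∃ e, d = e + 1 := ⟨d - 1, by omega⟩
  have hk : 1 ≤ k := NeZero.one_le
  rw [Nat.add_sub_cancel]
  refine diam_le_of_edist_le fun u v => ?_
  let π := HVertex.projTop (k := k) e
  calc (HGraph k e).edist u v
      ≤ (HGraph k e).edist u (π u) + (HGraph k e).edist (π u) (π v)
        + (HGraph k e).edist (π v) v :=
        SimpleGraph.edist_triangle.trans (by gcongr; exact SimpleGraph.edist_triangle)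
    _ ≤ (e * k : ℕ) + (k - 1 : ℕ) + (e * k : ℕ) := by
        gcongr
        · exact HGraph.edist_projTop_le e u
        · exact HGraph.edist_ofTop_le e _ _
        · rw [SimpleGraph.edist_comm]; exact HGraph.edist_projTop_le e v
    _ ≤ ((2 * (e + 1) - 1) * k : ℕ) := by
        norm_cast
        rw [show 2 * (e + 1) - 1 = 2 * e + 1 by omega]
        grind

/-- For all integers `d ≥ 1` and `k ≥ 2`, the diameter of `H_{d,k}`
(the maximum over pairs of vertices of the graph distance) is at most `(2d − 1)·k`. -/
theorem hgraph_diameter_bound (d k : ℕ) (hd : 1 ≤ d) (hk : 2 ≤ k) [NeZero k] :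
    (HGraph k (d - 1)).diam ≤ (2 * d - 1) * k :=
  hgraph_diameter_bound_general d k hd
end

section
/- For L > μ > 0, the function F : ℓ² → ℝ defined by F(x) = (μ/2)·‖x‖² + ((L−μ)/4)·[(x₁ − 1)² + ∑_{k=1}^∞ (x_k − x_{k+1})²] is μ-strongly convex and (2L−μ)-smooth: for all x, y ∈ ℓ², (μ/2)·‖y − x‖² ≤ F(y) − F(x) − ⟨∇F(x), y − x⟩ ≤ ((2L−μ)/2)·‖y − x‖². -/
open scoped RealInnerProductSpace

noncomputable section Aux

private def Tfun (x : ℕ → ℝ) : ℕ → ℝ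
  | 0 => x 0
  | (k + 1) => x k - x (k + 1)

private lemma two_toReal : (2 : ENNReal).toReal = 2 := by norm_num

private lemma summable_sq (x : lp (fun _ : ℕ => ℝ) 2) :
    Summable fun n => (x n) ^ 2 := by
  have h := (lp.hasSum_norm (p := 2) (by norm_num) x).summable
  simpa [two_toReal, Real.rpow_natCast, sq_abs] using h

private lemma norm_sq_eq (x : lp (fun _ : ℕ => ℝ) 2) :
    ‖x‖ ^ 2 = ∑' n, (x n) ^ 2 := by
  have h := lp.norm_rpow_eq_tsum (p := 2) (by norm_num) x
  rw [two_toReal] at h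
  simpa [Real.rpow_natCast, sq_abs] using h

private lemma sub_sq_le (a b : ℝ) : (a - b) ^ 2 ≤ 2 * a ^ 2 + 2 * b ^ 2 := by
  nlinarith [sq_nonneg (a + b)]

private lemma memℓp_Tfun (x : lp (fun _ : ℕ => ℝ) 2) : Memℓp (Tfun x) 2 := by
  apply memℓp_gen
  rw [two_toReal]
  have : Summable fun n => ‖Tfun (x : ℕ → ℝ) n‖ ^ (2 : ℕ) := by
    rw [← summable_nat_add_iff 1]
    have hb : Summable fun k : ℕ => 2 * (x k) ^ 2 + 2 * (x (k + 1)) ^ 2 :=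
      ((summable_sq x).mul_left 2).add
        (((summable_nat_add_iff 1).2 (summable_sq x)).mul_left 2)
    refine Summable.of_nonneg_of_le (fun k => by positivity) (fun k => ?_) hb
    show ‖Tfun (x : ℕ → ℝ) (k + 1)‖ ^ 2 ≤ _
    simp only [Tfun, Real.norm_eq_abs, sq_abs]
    exact sub_sq_le _ _
  simpa [Real.rpow_natCast] using this

private def Tel (x : lp (fun _ : ℕ => ℝ) 2) : lp (fun _ : ℕ => ℝ) 2 :=
  ⟨Tfun x, memℓp_Tfun x⟩

private lemma Tel_apply (x : lp (fun _ : ℕ => ℝ) 2) (n : ℕ) :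
    (Tel x) n = Tfun x n := rfl

private lemma Tel_apply_zero (x : lp (fun _ : ℕ => ℝ) 2) :
    (Tel x) 0 = x 0 := rfl

private lemma Tel_apply_succ (x : lp (fun _ : ℕ => ℝ) 2) (k : ℕ) :
    (Tel x) (k + 1) = x k - x (k + 1) := rfl

attribute [irreducible] Tel

private lemma tsum_shift_sq (x : lp (fun _ : ℕ => ℝ) 2) :
    (∑' k : ℕ, (x (k + 1)) ^ 2) = ‖x‖ ^ 2 - (x 0) ^ 2 := by
  have h := Summable.tsum_eq_zero_add (summable_sq x)
  rw [norm_sq_eq x, h]; ring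

private lemma Tel_norm_sq_le (x : lp (fun _ : ℕ => ℝ) 2) :
    ‖Tel x‖ ^ 2 ≤ 4 * ‖x‖ ^ 2 := by
  rw [norm_sq_eq (Tel x)]
  have hsum : Summable fun n => ((Tel x) n) ^ 2 := summable_sq (Tel x)
  rw [Summable.tsum_eq_zero_add hsum]
  have hle : (∑' k : ℕ, ((Tel x) (k + 1)) ^ 2) ≤
      ∑' k : ℕ, (2 * (x k) ^ 2 + 2 * (x (k + 1)) ^ 2) := by
    refine Summable.tsum_le_tsum (fun k => ?_) ((summable_nat_add_iff 1).2 hsum)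
      (((summable_sq x).mul_left 2).add
        (((summable_nat_add_iff 1).2 (summable_sq x)).mul_left 2))
    rw [Tel_apply_succ]
    exact sub_sq_le (x k) (x (k + 1))
  have hsplit : (∑' k : ℕ, (2 * (x k) ^ 2 + 2 * (x (k + 1)) ^ 2)) =
      2 * ‖x‖ ^ 2 + 2 * (‖x‖ ^ 2 - (x 0) ^ 2) := by
    rw [Summable.tsum_add (((summable_sq x)).mul_left 2)
        ((((summable_nat_add_iff 1)).2 (summable_sq x)).mul_left 2),
      tsum_mul_left, tsum_mul_left, ← norm_sq_eq x, tsum_shift_sq x]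
  have hx0 : (x 0) ^ 2 ≤ ‖x‖ ^ 2 := by
    rw [norm_sq_eq x]
    exact Summable.le_tsum (summable_sq x) 0 (fun k _ => sq_nonneg _)
  rw [Tel_apply_zero]
  nlinarith [hle, hsplit]

private def Tlin : lp (fun _ : ℕ => ℝ) 2 →ₗ[ℝ] lp (fun _ : ℕ => ℝ) 2 where
  toFun := Tel
  map_add' x y := by
    show Tel (x + y) = Tel x + Tel y
    apply lp.ext
    funext n
    have hx : ((x + y : lp (fun _ : ℕ => ℝ) 2) : ℕ → ℝ) = (x : ℕ → ℝ) + y := lp.coeFn_add x y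
    have h2 : ((Tel x + Tel y : lp (fun _ : ℕ => ℝ) 2) : ℕ → ℝ) n = Tel x n + Tel y n := by
      rw [lp.coeFn_add]; rfl
    show Tel (x + y) n = _
    rw [h2]
    cases n with
    | zero =>
        rw [Tel_apply_zero, Tel_apply_zero, Tel_apply_zero, hx]; rfl
    | succ k =>
        rw [Tel_apply_succ, Tel_apply_succ, Tel_apply_succ, hx]
        show ((x : ℕ → ℝ) + y) k - ((x : ℕ → ℝ) + y) (k + 1) = _
        simp only [Pi.add_apply]; ring
  map_smul' c x := by
    show Tel (c • x) = c • Tel x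
    apply lp.ext
    funext n
    have hx : ((c • x : lp (fun _ : ℕ => ℝ) 2) : ℕ → ℝ) = c • (x : ℕ → ℝ) := lp.coeFn_smul c x
    have h2 : ((c • Tel x : lp (fun _ : ℕ => ℝ) 2) : ℕ → ℝ) n = c * Tel x n := by
      rw [lp.coeFn_smul]; rfl
    show Tel (c • x) n = _
    rw [h2]
    cases n with
    | zero =>
        rw [Tel_apply_zero, Tel_apply_zero, hx]; rfl
    | succ k =>
        rw [Tel_apply_succ, Tel_apply_succ, hx]
        show (c • (x : ℕ → ℝ)) k - (c • (x : ℕ → ℝ)) (k + 1) = _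
        simp only [Pi.smul_apply, smul_eq_mul]; ring

private def Tcl : lp (fun _ : ℕ => ℝ) 2 →L[ℝ] lp (fun _ : ℕ => ℝ) 2 :=
  LinearMap.mkContinuous Tlin 2 (by
    intro x
    have h : ‖Tlin x‖ ^ 2 ≤ 4 * ‖x‖ ^ 2 := Tel_norm_sq_le x
    nlinarith [norm_nonneg (Tlin x), norm_nonneg x])

private lemma Tcl_eq (x : lp (fun _ : ℕ => ℝ) 2) : Tcl x = Tel x := rfl

private lemma Tcl_norm_sq_le (x : lp (fun _ : ℕ => ℝ) 2) :
    ‖Tcl x‖ ^ 2 ≤ 4 * ‖x‖ ^ 2 := Tel_norm_sq_le x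

private def e₀ : lp (fun _ : ℕ => ℝ) 2 := lp.single 2 0 1

private lemma norm_Tcl_sub_e₀ (x : lp (fun _ : ℕ => ℝ) 2) :
    ‖Tcl x - e₀‖ ^ 2 = (x 0 - 1) ^ 2 + ∑' k : ℕ, (x k - x (k + 1)) ^ 2 := by
  rw [norm_sq_eq]
  have hco : ∀ n, ((Tcl x - e₀ : lp (fun _ : ℕ => ℝ) 2) : ℕ → ℝ) n
      = Tel x n - e₀ n := fun n => by
    rw [lp.coeFn_sub]; rfl
  have h0 : e₀ 0 = 1 := lp.single_apply_self 2 0 1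
  have hs : ∀ k : ℕ, e₀ (k + 1) = 0 := fun k =>
    lp.single_apply_ne 2 0 1 (by simp)
  rw [Summable.tsum_eq_zero_add (summable_sq _)]
  have h1 : (((Tcl x - e₀ : lp (fun _ : ℕ => ℝ) 2)) 0) ^ 2 = (x 0 - 1) ^ 2 := by
    rw [hco 0, h0, Tel_apply_zero]
  have h2 : ∀ k : ℕ, (((Tcl x - e₀ : lp (fun _ : ℕ => ℝ) 2)) (k + 1)) ^ 2
      = (x k - x (k + 1)) ^ 2 := fun k => by
    rw [hco (k + 1), hs k, Tel_apply_succ]; ring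
  rw [h1, tsum_congr h2]

end Aux

/-- For `L > μ > 0`, the function
`F(x) = (μ/2)‖x‖² + ((L−μ)/4)[(x₁ − 1)² + ∑_{k≥1} (x_k − x_{k+1})²]` on `ℓ²`
(coordinates indexed from `0`, so the `0`-th coordinate is `x₁`) is `μ`-strongly convex
and `(2L−μ)`-smooth:
`(μ/2)‖y − x‖² ≤ F(y) − F(x) − ⟪∇F(x), y − x⟫ ≤ ((2L−μ)/2)‖y − x‖²` for all `x, y ∈ ℓ²`. -/
theorem lower_bound_function_convexity_smoothness (L μ : ℝ) (hμ : 0 < μ) (hμL : μ < L)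
    (F : lp (fun _ : ℕ => ℝ) 2 → ℝ)
    (hF : ∀ x : lp (fun _ : ℕ => ℝ) 2,
      F x = μ / 2 * ‖x‖ ^ 2 +
        (L - μ) / 4 * ((x 0 - 1) ^ 2 + ∑' k : ℕ, (x k - x (k + 1)) ^ 2)) :
    ∀ x y : lp (fun _ : ℕ => ℝ) 2,
      μ / 2 * ‖y - x‖ ^ 2 ≤ F y - F x - ⟪gradient F x, y - x⟫ ∧
      F y - F x - ⟪gradient F x, y - x⟫ ≤ (2 * L - μ) / 2 * ‖y - x‖ ^ 2 := by
  have hF' : ∀ x, F x = μ / 2 * ‖x‖ ^ 2 + (L - μ) / 4 * ‖Tcl x - e₀‖ ^ 2 := by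
    intro x; rw [hF x, norm_Tcl_sub_e₀ x]
  set g : lp (fun _ : ℕ => ℝ) 2 → lp (fun _ : ℕ => ℝ) 2 := fun x =>
    μ • x + ((L - μ) / 2) • (ContinuousLinearMap.adjoint Tcl) (Tcl x - e₀) with hg
  have key : ∀ x h : lp (fun _ : ℕ => ℝ) 2,
      F (x + h) - F x - ⟪g x, h⟫ = μ / 2 * ‖h‖ ^ 2 + (L - μ) / 4 * ‖Tcl h‖ ^ 2 := by
    intro x h
    have h1 : ‖x + h‖ ^ 2 = ‖x‖ ^ 2 + 2 * ⟪x, h⟫ + ‖h‖ ^ 2 := norm_add_sq_real x h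
    have h2 : Tcl (x + h) - e₀ = (Tcl x - e₀) + Tcl h := by rw [map_add]; abel
    have h3 : ‖(Tcl x - e₀) + Tcl h‖ ^ 2
        = ‖Tcl x - e₀‖ ^ 2 + 2 * ⟪Tcl x - e₀, Tcl h⟫ + ‖Tcl h‖ ^ 2 := norm_add_sq_real _ _
    have h4 : ⟪g x, h⟫ = μ * ⟪x, h⟫ + (L - μ) / 2 * ⟪Tcl x - e₀, Tcl h⟫ := by
      rw [hg]
      rw [inner_add_left, real_inner_smul_left, real_inner_smul_left,
        ContinuousLinearMap.adjoint_inner_left]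
    rw [hF', hF', h2, h3, h1, h4]
    ring
  have hgrad : ∀ x, gradient F x = g x := by
    intro x
    refine HasGradientAt.gradient ?_
    rw [hasGradientAt_iff_isLittleO]
    have heq : ∀ x', F x' - F x - ⟪g x, x' - x⟫
        = μ / 2 * ‖x' - x‖ ^ 2 + (L - μ) / 4 * ‖Tcl (x' - x)‖ ^ 2 := by
      intro x'
      have := key x (x' - x)
      rwa [add_sub_cancel] at this
    rw [Asymptotics.isLittleO_iff]
    intro c hc
    have hC : (0 : ℝ) < μ / 2 + (L - μ) := by linarith
    have hev : ∀ᶠ x' in nhds x, ‖x' - x‖ ≤ c / (μ / 2 + (L - μ)) := by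
      have : ∀ᶠ x' in nhds x, dist x' x < c / (μ / 2 + (L - μ)) :=
        Metric.eventually_nhds_iff.2 ⟨c / (μ / 2 + (L - μ)), by positivity, fun _ h => h⟩
      filter_upwards [this] with x' h
      rw [dist_eq_norm] at h; exact h.le
    filter_upwards [hev] with x' hx'
    rw [heq x']
    have hT : ‖Tcl (x' - x)‖ ^ 2 ≤ 4 * ‖x' - x‖ ^ 2 := Tcl_norm_sq_le _
    have hnn : (0:ℝ) ≤ ‖Tcl (x' - x)‖ ^ 2 := sq_nonneg _
    have habs : ‖μ / 2 * ‖x' - x‖ ^ 2 + (L - μ) / 4 * ‖Tcl (x' - x)‖ ^ 2‖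
        ≤ (μ / 2 + (L - μ)) * ‖x' - x‖ ^ 2 := by
      rw [Real.norm_eq_abs, abs_of_nonneg (by nlinarith [sq_nonneg ‖x' - x‖, hnn])]
      nlinarith
    refine habs.trans ?_
    have h1 : (μ / 2 + (L - μ)) * ‖x' - x‖ ^ 2
        = ((μ / 2 + (L - μ)) * ‖x' - x‖) * ‖x' - x‖ := by ring
    rw [h1]
    have h2 : (μ / 2 + (L - μ)) * ‖x' - x‖ ≤ c := by
      rw [← le_div_iff₀' hC]; exact hx'
    exact mul_le_mul_of_nonneg_right h2 (norm_nonneg _)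
  intro x y
  have hk := key x (y - x)
  rw [add_sub_cancel] at hk
  rw [hgrad x]
  rw [hk]
  have hT : ‖Tcl (y - x)‖ ^ 2 ≤ 4 * ‖y - x‖ ^ 2 := Tcl_norm_sq_le _
  have hnn : (0:ℝ) ≤ ‖Tcl (y - x)‖ ^ 2 := sq_nonneg _
  constructor
  · nlinarith
  · nlinarith
end
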